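/- Let p, l, δ > 0 and set A := 2^(−(l(p+l−1)+p)/(p+l)) · (p+l)/(p + 2l + δ(p+l)). Let C > 0 with C < A, and let γ₁ ≥ γ₀ > 0 satisfy γ₀ > A⁻¹ C γ₁. With Ξ := (l/(p+l)) · C^(−p/l) · γ₁^(−p/l) · 2^(−p(p+(p+l−1)l)/(l(p+l))), one has (1 + δ + l/(p+l)) · ( Ξ · C^((p+l)/l) · γ₁^((p+l)/l) · 2^(p/l+p+l−1) + (p/(p+l)) · ((p+l)/l)^(−l/p) · Ξ^(−l/p) ) < γ₀. -/
import Mathlib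


theorem key_absorption (p l δ C γ₀ γ₁ : ℝ) (hp : 0 < p) (hl : 0 < l) (hδ : 0 < δ)
    (A : ℝ)
    (hA : A = 2 ^ (-((l * (p + l - 1) + p) / (p + l))) *
      ((p + l) / (p + 2 * l + δ * (p + l))))
    (hC : 0 < C) (hCA : C < A)
    (hγ₀ : 0 < γ₀) (hγ : γ₀ ≤ γ₁) (hγ₀A : γ₀ > A⁻¹ * C * γ₁)
    (Ξ : ℝ)
    (hΞ : Ξ = (l / (p + l)) * C ^ (-(p / l)) * γ₁ ^ (-(p / l)) *
      2 ^ (-(p * (p + (p + l - 1) * l) / (l * (p + l))))) :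
    (1 + δ + l / (p + l)) *
      (Ξ * C ^ ((p + l) / l) * γ₁ ^ ((p + l) / l) * 2 ^ (p / l + p + l - 1) +
        (p / (p + l)) * ((p + l) / l) ^ (-(l / p)) * Ξ ^ (-(l / p))) < γ₀ := by
  have hpl : 0 < p + l := by linarith
  have hγ₁ : 0 < γ₁ := hγ₀.trans_le hγ
  have hlne : l ≠ 0 := hl.ne'
  have hplne : (p + l) ≠ 0 := hpl.ne'
  have hpne : p ≠ 0 := hp.ne'
  have h2 : (0:ℝ) < 2 := by norm_num
  set E : ℝ := (l * (p + l - 1) + p) / (p + l) with hEdef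
  set e1 : ℝ := -(p * (p + (p + l - 1) * l) / (l * (p + l))) with he1def
  -- first term
  have hc : C ^ (-(p / l)) * C ^ ((p + l) / l) = C := by
    rw [← Real.rpow_add hC, show -(p / l) + (p + l) / l = 1 by field_simp; ring, Real.rpow_one]
  have hg : γ₁ ^ (-(p / l)) * γ₁ ^ ((p + l) / l) = γ₁ := by
    rw [← Real.rpow_add hγ₁, show -(p / l) + (p + l) / l = 1 by field_simp; ring, Real.rpow_one]
  have h2e : (2:ℝ) ^ e1 * 2 ^ (p / l + p + l - 1) = 2 ^ E := by
    rw [← Real.rpow_add h2]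
    congr 1
    rw [he1def, hEdef]
    field_simp
    ring
  have hT1 : Ξ * C ^ ((p + l) / l) * γ₁ ^ ((p + l) / l) * 2 ^ (p / l + p + l - 1)
      = (l / (p + l)) * C * γ₁ * 2 ^ E := by
    rw [hΞ]
    calc (l / (p + l)) * C ^ (-(p / l)) * γ₁ ^ (-(p / l)) * 2 ^ e1 *
          C ^ ((p + l) / l) * γ₁ ^ ((p + l) / l) * 2 ^ (p / l + p + l - 1)
        = (l / (p + l)) * (C ^ (-(p / l)) * C ^ ((p + l) / l)) *
          (γ₁ ^ (-(p / l)) * γ₁ ^ ((p + l) / l)) * (2 ^ e1 * 2 ^ (p / l + p + l - 1)) := by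
          ring
      _ = (l / (p + l)) * C * γ₁ * 2 ^ E := by rw [hc, hg, h2e]
  -- second term
  have hΞpos1 : (0:ℝ) ≤ l / (p + l) := by positivity
  have hΞpos2 : (0:ℝ) ≤ C ^ (-(p / l)) := (Real.rpow_pos_of_pos hC _).le
  have hΞpos3 : (0:ℝ) ≤ γ₁ ^ (-(p / l)) := (Real.rpow_pos_of_pos hγ₁ _).le
  have hsplit : Ξ ^ (-(l / p)) = (l / (p + l)) ^ (-(l / p)) * (C ^ (-(p / l))) ^ (-(l / p)) *
      (γ₁ ^ (-(p / l))) ^ (-(l / p)) * ((2:ℝ) ^ e1) ^ (-(l / p)) := by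
    rw [hΞ, Real.mul_rpow (by positivity) (by positivity),
      Real.mul_rpow (by positivity) (by positivity),
      Real.mul_rpow (by positivity) (by positivity)]
  have hcc : (C ^ (-(p / l))) ^ (-(l / p)) = C := by
    rw [← Real.rpow_mul hC.le, show -(p / l) * -(l / p) = 1 by field_simp, Real.rpow_one]
  have hgg : (γ₁ ^ (-(p / l))) ^ (-(l / p)) = γ₁ := by
    rw [← Real.rpow_mul hγ₁.le, show -(p / l) * -(l / p) = 1 by field_simp, Real.rpow_one]
  have h2g : ((2:ℝ) ^ e1) ^ (-(l / p)) = 2 ^ E := by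
    rw [← Real.rpow_mul h2.le]
    congr 1
    rw [he1def, hEdef]
    field_simp
    ring
  have hone : ((p + l) / l) ^ (-(l / p)) * (l / (p + l)) ^ (-(l / p)) = 1 := by
    rw [← Real.mul_rpow (by positivity) (by positivity),
      show (p + l) / l * (l / (p + l)) = 1 by field_simp, Real.one_rpow]
  have hT2 : (p / (p + l)) * ((p + l) / l) ^ (-(l / p)) * Ξ ^ (-(l / p))
      = (p / (p + l)) * C * γ₁ * 2 ^ E := by
    rw [hsplit, hcc, hgg, h2g]
    calc (p / (p + l)) * ((p + l) / l) ^ (-(l / p)) *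
          ((l / (p + l)) ^ (-(l / p)) * C * γ₁ * 2 ^ E)
        = (p / (p + l)) * (((p + l) / l) ^ (-(l / p)) * (l / (p + l)) ^ (-(l / p))) *
          C * γ₁ * 2 ^ E := by ring
      _ = (p / (p + l)) * C * γ₁ * 2 ^ E := by rw [hone]; ring
  -- A⁻¹
  have hAinv : A⁻¹ = 2 ^ E * ((p + 2 * l + δ * (p + l)) / (p + l)) := by
    rw [hA, mul_inv, ← Real.rpow_neg h2.le, neg_neg, inv_div]
  have key : (1 + δ + l / (p + l)) *
      (Ξ * C ^ ((p + l) / l) * γ₁ ^ ((p + l) / l) * 2 ^ (p / l + p + l - 1) +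
        (p / (p + l)) * ((p + l) / l) ^ (-(l / p)) * Ξ ^ (-(l / p))) = A⁻¹ * C * γ₁ := by
    rw [hT1, hT2, hAinv]
    field_simp
    ring
  rw [key]
  exact hγ₀A
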